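/- Let G be a graph with γ(G) = k whose vertex set is partitioned into cliques C_1,...,C_{k+n}. Suppose D ⊆ V(G) dominates the union of l+t cliques of the partition, where D is disjoint from l of these cliques and meets exactly t of them (the cliques C_{j_1},...,C_{j_t}, so D ⊆ C_{j_1} ∪ ... ∪ C_{j_t}). Then there is no set E of vertices of G contained in the complement of these l+t cliques such that E dominates, and is disjoint from or meets, cliques of the partition outside the l+t, with total number of cliques dominated by E (those it is disjoint from plus those it intersects) equal to |D| + |E| + n − (l+t) + 1. In other words, the union D ∪ E together with one vertex from each clique not dominated by D ∪ E would yield a dominating set of G of size at most k − 1, a contradiction. -/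

import Mathlib

/-!
If `E` existed, then `D ∪ E`, together with one vertex from each of the cliques involved in
neither `D` nor `E`, would dominate `G`. There are `(k + n) - (l + t) - (l' + t')` such cliques,
so by the cardinality condition on `E` this dominating set has at most `k - 1` vertices,
contradicting `γ(G) = k`.
-/

open Finset

/-- `S` dominates `T`: every vertex of `T` is in the closed neighborhood of `S`. -/
def Dominates {V : Type*} (G : SimpleGraph V) (S T : Set V) : Prop :=
  ∀ t ∈ T, ∃ s ∈ S, s = t ∨ G.Adj s t

/-- The domination number of a finite graph. -/
noncomputable def domNum {V : Type*} [Fintype V] (G : SimpleGraph V) : ℕ :=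
  sInf {n | ∃ D : Finset V, D.card = n ∧ Dominates G ↑D Set.univ}

/-- A partition of the vertex set of `G` into `m` cliques. -/
structure CliquePartition {V : Type*} (G : SimpleGraph V) (m : ℕ) where
  parts : Fin m → Finset V
  disj : ∀ i j, i ≠ j → Disjoint (parts i) (parts j)
  cover : ∀ v, ∃ i, v ∈ parts i
  clique : ∀ i, G.IsClique ↑(parts i)

/-- `S` is restraining with avoided-and-dominated cliques indexed by `L` and met
cliques indexed by `T` (so `S` is `(|S|, |L|+|T|)`-restraining). -/
def IsRestrainingOn {V : Type*} [DecidableEq V] {G : SimpleGraph V} {m : ℕ}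
    (P : CliquePartition G m) (S : Finset V) (L T : Finset (Fin m)) : Prop :=
  Disjoint L T ∧
  (∀ i ∈ L, Disjoint S (P.parts i)) ∧
  Dominates G ↑S ↑(L.biUnion P.parts) ∧
  (S ⊆ T.biUnion P.parts) ∧
  (∀ i ∈ T, (P.parts i ∩ S).Nonempty)

section Domination

variable {V : Type*} {G : SimpleGraph V}

lemma Dominates.mono_left {S S' T : Set V} (h : Dominates G S T) (hS : S ⊆ S') :
    Dominates G S' T := fun t ht => by
  obtain ⟨s, hs, hst⟩ := h t ht
  exact ⟨s, hS hs, hst⟩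

lemma Dominates.mono_right {S T T' : Set V} (h : Dominates G S T) (hT : T' ⊆ T) :
    Dominates G S T' := fun t ht => h t (hT ht)

lemma SimpleGraph.IsClique.dominates_of_mem {C : Set V} (hC : G.IsClique C) {S : Set V}
    {v : V} (hvS : v ∈ S) (hvC : v ∈ C) : Dominates G S C := fun t ht =>
  ⟨v, hvS, (eq_or_ne v t).imp_right (hC hvC ht)⟩

lemma domNum_le_card [Fintype V] {S : Finset V} (h : Dominates G ↑S Set.univ) :
    domNum G ≤ S.card :=
  Nat.sInf_le ⟨S, rfl, h⟩

end Domination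

namespace CliquePartition

variable {V : Type*} {G : SimpleGraph V} {m : ℕ} (P : CliquePartition G m)

lemma dominates_univ {S : Set V} (h : ∀ i, Dominates G S ↑(P.parts i)) :
    Dominates G S Set.univ := fun v _ => by
  obtain ⟨i, hv⟩ := P.cover v
  exact h i v hv

lemma exists_card_le_one_dominates_part (i : Fin m) :
    ∃ R : Finset V, R.card ≤ 1 ∧ Dominates G ↑R ↑(P.parts i) := by
  rcases (P.parts i).eq_empty_or_nonempty with h | ⟨v, hv⟩
  · exact ⟨∅, by simp, by simp [h, Dominates]⟩
  · exact ⟨{v}, by simp, (P.clique i).dominates_of_mem (by simp) hv⟩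

lemma exists_card_le_dominates_parts [DecidableEq V] (I : Finset (Fin m)) :
    ∃ R : Finset V, R.card ≤ I.card ∧ ∀ i ∈ I, Dominates G ↑R ↑(P.parts i) := by
  choose R hRcard hR using P.exists_card_le_one_dominates_part
  refine ⟨I.biUnion R, ?_, fun i hi => ?_⟩
  · simpa using card_biUnion_le_card_mul I R 1 fun i _ => hRcard i
  · exact (hR i).mono_left (coe_subset.2 (subset_biUnion_of_mem R hi))

end CliquePartition

lemma IsRestrainingOn.dominates_part {V : Type*} [DecidableEq V] {G : SimpleGraph V} {m : ℕ}
    {P : CliquePartition G m} {S : Finset V} {L T : Finset (Fin m)}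
    (h : IsRestrainingOn P S L T) {i : Fin m} (hi : i ∈ L ∪ T) :
    Dominates G ↑S ↑(P.parts i) := by
  obtain ⟨-, -, hdom, -, hmeet⟩ := h
  rcases mem_union.1 hi with hiL | hiT
  · exact hdom.mono_right (coe_subset.2 (subset_biUnion_of_mem P.parts hiL))
  · obtain ⟨v, hv⟩ := hmeet i hiT
    exact (P.clique i).dominates_of_mem (mem_coe.2 (mem_inter.1 hv).2) (mem_inter.1 hv).1

/-- Lemma 2: a `(|D|, l+t)`-restraining set `D` forbids, outside the `l+t` cliques it
involves, any set `E` which is `(|E|, |D|+|E|+n-(l+t)+1)`-restraining. -/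
theorem stmt3 {V : Type*} [Fintype V] [DecidableEq V] (G : SimpleGraph V) (k n : ℕ)
    (hk : domNum G = k) (P : CliquePartition G (k + n))
    (D : Finset V) (L T : Finset (Fin (k + n)))
    (hD : IsRestrainingOn P D L T) :
    ¬ ∃ (E : Finset V) (L' T' : Finset (Fin (k + n))),
        Disjoint (L' ∪ T') (L ∪ T) ∧
        (∀ v ∈ E, v ∉ (L ∪ T).biUnion P.parts) ∧
        IsRestrainingOn P E L' T' ∧
        (L'.card + T'.card : ℤ) = D.card + E.card + n - (L.card + T.card) + 1 := by
  rintro ⟨E, L', T', hdisj, -, hE, hcard⟩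
  obtain ⟨R, hRcard, hR⟩ := P.exists_card_le_dominates_parts ((L ∪ T) ∪ (L' ∪ T'))ᶜ
  have hdom : Dominates G ↑(D ∪ E ∪ R) Set.univ := P.dominates_univ fun i => by
    by_cases hi : i ∈ L ∪ T
    · exact (hD.dominates_part hi).mono_left
        (coe_subset.2 (subset_union_left.trans subset_union_left))
    by_cases hi' : i ∈ L' ∪ T'
    · exact (hE.dominates_part hi').mono_left
        (coe_subset.2 (subset_union_right.trans subset_union_left))
    · exact (hR i (mem_compl.2 (notMem_union.2 ⟨hi, hi'⟩))).mono_left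
        (coe_subset.2 subset_union_right)
  have hk_le : k ≤ D.card + E.card + R.card :=
    hk ▸ (domNum_le_card hdom).trans
      ((card_union_le _ _).trans (Nat.add_le_add_right (card_union_le D E) _))
  have hU : ((L ∪ T) ∪ (L' ∪ T')).card = L.card + T.card + (L'.card + T'.card) := by
    rw [card_union_of_disjoint hdisj.symm, card_union_of_disjoint hD.1,
      card_union_of_disjoint hE.1]
  have hUle := card_le_univ ((L ∪ T) ∪ (L' ∪ T'))
  rw [card_compl, Fintype.card_fin] at hRcard
  simp only [Fintype.card_fin] at hUle
  omega
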